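/- Let J be a finite nonempty index set and φ_j an fPIL formula over a finite set of ports P for each j ∈ J. Then ⊗_{j∈J} (~φ_j) ≡ ~(⊎_{j∈J} φ_j) as fPCL formulas. -/

import Mathlib

/-- A De Morgan algebra: a bounded distributive lattice equipped with a
complement map satisfying involution and the De Morgan laws. -/
class DeMorganAlg (K : Type) extends DistribLattice K, BoundedOrder K where
  compl : K → K
  compl_compl : ∀ k : K, compl (compl k) = k
  compl_sup : ∀ k k' : K, compl (k ⊔ k') = compl k ⊓ compl k'
  compl_inf : ∀ k k' : K, compl (k ⊓ k') = compl k ⊔ compl k'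

/-- fPIL formulas over the set of ports `P`. -/
inductive fPIL (P : Type) : Type where
  | tt : fPIL P
  | port : P → fPIL P
  | fnot : fPIL P → fPIL P
  | fdisj : fPIL P → fPIL P → fPIL P

/-- Fuzzy conjunction of fPIL formulas. -/
def fPIL.fconj {P : Type} (φ₁ φ₂ : fPIL P) : fPIL P :=
  .fnot (.fdisj (.fnot φ₁) (.fnot φ₂))

/-- The fPIL formula `false`. -/
def fPIL.ff {P : Type} : fPIL P := .fnot .tt

/-- K-fuzzy interactions on `P`: maps `a : P → K` with `a p ≠ 0` for some port `p`. -/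
def fI (P K : Type) [DeMorganAlg K] : Type := {a : P → K // ∃ p : P, a p ≠ ⊥}

/-- Semantics of fPIL formulas. -/
def fPIL.sem {P K : Type} [DeMorganAlg K] : fPIL P → fI P K → K
  | .tt, _ => ⊤
  | .port p, a => a.1 p
  | .fnot φ, a => DeMorganAlg.compl (φ.sem a)
  | .fdisj φ₁ φ₂, a => φ₁.sem a ⊔ φ₂.sem a

/-- Equivalence of fPIL formulas: equal semantics over every De Morgan algebra
and every fuzzy interaction. -/
def pilEquiv {P : Type} (φ₁ φ₂ : fPIL P) : Prop :=
  ∀ (K : Type) [DeMorganAlg K] (a : fI P K), φ₁.sem a = φ₂.sem a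
noncomputable instance {P K : Type} [DeMorganAlg K] : DecidableEq (fI P K) :=
  Classical.decEq _

/-- fPCL formulas over the set of ports `P`. -/
inductive fPCL (P : Type) : Type where
  | pil : fPIL P → fPCL P
  | cneg : fPCL P → fPCL P
  | oplus : fPCL P → fPCL P → fPCL P
  | coal : fPCL P → fPCL P → fPCL P

/-- Fuzzy conjunction `⊗` of fPCL formulas. -/
def fPCL.otimes {P : Type} (ζ₁ ζ₂ : fPCL P) : fPCL P :=
  .cneg (.oplus (.cneg ζ₁) (.cneg ζ₂))

/-- The closure operator `~ζ := ζ ⊎ true`. -/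
def fPCL.closure {P : Type} (ζ : fPCL P) : fPCL P := .coal ζ (.pil .tt)

/-- Semantics of fPCL formulas on finite sets of fuzzy interactions. -/
noncomputable def fPCL.sem {P K : Type} [DeMorganAlg K] :
    fPCL P → Finset (fI P K) → K
  | .pil φ, γ => γ.inf fun a => φ.sem a
  | .cneg ζ, γ => DeMorganAlg.compl (ζ.sem γ)
  | .oplus ζ₁ ζ₂, γ => ζ₁.sem γ ⊔ ζ₂.sem γ
  | .coal ζ₁ ζ₂, γ =>
      ((γ.powerset ×ˢ γ.powerset).filter fun q =>
          q.1.Nonempty ∧ q.2.Nonempty ∧ q.1 ∪ q.2 = γ).sup fun q =>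
        ζ₁.sem q.1 ⊓ ζ₂.sem q.2

/-- Equivalence of fPCL formulas: equal semantics over every De Morgan algebra
and every nonempty finite set of fuzzy interactions. -/
def pclEquiv {P : Type} (ζ₁ ζ₂ : fPCL P) : Prop :=
  ∀ (K : Type) [DeMorganAlg K] (γ : Finset (fI P K)), γ.Nonempty →
    ζ₁.sem γ = ζ₂.sem γ
/-- Iterated fuzzy disjunction `⋁f_{j∈Fin (n+1)} φ j` of fPIL formulas over the
finite nonempty index set `Fin (n+1)`. -/
def fPIL.bigDisj {P : Type} : (n : ℕ) → (Fin (n + 1) → fPIL P) → fPIL P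
  | 0, φ => φ 0
  | n + 1, φ => .fdisj (fPIL.bigDisj n fun i => φ i.castSucc) (φ (Fin.last (n + 1)))

/-- Iterated fuzzy conjunction `⋀f_{j∈Fin (n+1)} φ j` of fPIL formulas. -/
def fPIL.bigConj {P : Type} : (n : ℕ) → (Fin (n + 1) → fPIL P) → fPIL P
  | 0, φ => φ 0
  | n + 1, φ => fPIL.fconj (fPIL.bigConj n fun i => φ i.castSucc) (φ (Fin.last (n + 1)))

/-- Iterated coalescing `⊎_{j∈Fin (n+1)} ζ j` of fPCL formulas. -/
def fPCL.bigCoal {P : Type} : (n : ℕ) → (Fin (n + 1) → fPCL P) → fPCL P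
  | 0, ζ => ζ 0
  | n + 1, ζ => .coal (fPCL.bigCoal n fun i => ζ i.castSucc) (ζ (Fin.last (n + 1)))

/-- Iterated fuzzy conjunction `⊗_{j∈Fin (n+1)} ζ j` of fPCL formulas. -/
def fPCL.bigOtimes {P : Type} : (n : ℕ) → (Fin (n + 1) → fPCL P) → fPCL P
  | 0, ζ => ζ 0
  | n + 1, ζ => (fPCL.bigOtimes n fun i => ζ i.castSucc).otimes (ζ (Fin.last (n + 1)))

/-- Iterated fuzzy disjunction `⊕_{j∈Fin (n+1)} ζ j` of fPCL formulas. -/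
def fPCL.bigOplus {P : Type} : (n : ℕ) → (Fin (n + 1) → fPCL P) → fPCL P
  | 0, ζ => ζ 0
  | n + 1, ζ => .oplus (fPCL.bigOplus n fun i => ζ i.castSucc) (ζ (Fin.last (n + 1)))

/-! The closure `~ζ` is the join of `ζ` over all nonempty subsets of `γ`. Hence, by
distributivity, `~ζ₁ ⊗ ~ζ₂` is the join of `ζ₁(γ₁) ∧ ζ₂(γ₂)` over all pairs of nonempty
subsets of `γ`, and so is `~(ζ₁ ⊎ ζ₂)`, since such a pair is exactly a covering of its
union by two nonempty sets. Induction on `J` finishes the proof. -/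

namespace Finset

variable {α : Type*}

def nonemptySubsets (γ : Finset α) : Finset (Finset α) :=
  γ.powerset.filter Finset.Nonempty

@[simp]
theorem mem_nonemptySubsets {γ t : Finset α} : t ∈ γ.nonemptySubsets ↔ t ⊆ γ ∧ t.Nonempty := by
  simp [nonemptySubsets]

variable [DecidableEq α]

def coverPairs (γ : Finset α) : Finset (Finset α × Finset α) :=
  (γ.powerset ×ˢ γ.powerset).filter fun q => q.1.Nonempty ∧ q.2.Nonempty ∧ q.1 ∪ q.2 = γ

@[simp]
theorem mem_coverPairs {γ : Finset α} {q : Finset α × Finset α} :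
    q ∈ γ.coverPairs ↔ q.1.Nonempty ∧ q.2.Nonempty ∧ q.1 ∪ q.2 = γ := by
  simp only [coverPairs, mem_filter, mem_product, mem_powerset, and_iff_right_iff_imp]
  rintro ⟨-, -, rfl⟩
  exact ⟨subset_union_left, subset_union_right⟩

theorem image_fst_coverPairs (γ : Finset α) : γ.coverPairs.image Prod.fst = γ.nonemptySubsets := by
  ext t
  simp only [mem_image, mem_coverPairs, mem_nonemptySubsets, Prod.exists, exists_and_right,
    exists_eq_right]
  constructor
  · rintro ⟨t₂, ht, -, rfl⟩
    exact ⟨subset_union_left, ht⟩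
  · rintro ⟨hsub, ht⟩
    exact ⟨γ, ht, ht.mono hsub, union_eq_right.mpr hsub⟩

theorem biUnion_coverPairs_nonemptySubsets (γ : Finset α) :
    γ.nonemptySubsets.biUnion coverPairs = γ.nonemptySubsets ×ˢ γ.nonemptySubsets := by
  ext ⟨t₁, t₂⟩
  simp only [mem_biUnion, mem_coverPairs, mem_nonemptySubsets, mem_product]
  constructor
  · rintro ⟨t, ⟨ht, -⟩, h₁, h₂, rfl⟩
    exact ⟨⟨subset_union_left.trans ht, h₁⟩, subset_union_right.trans ht, h₂⟩
  · rintro ⟨⟨ht₁, h₁⟩, ht₂, h₂⟩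
    exact ⟨t₁ ∪ t₂, ⟨union_subset ht₁ ht₂, h₁.inl⟩, h₁, h₂, rfl⟩

end Finset

namespace fPCL

variable {P K : Type} [DeMorganAlg K]

theorem sem_otimes (ζ₁ ζ₂ : fPCL P) (γ : Finset (fI P K)) :
    (ζ₁.otimes ζ₂).sem γ = ζ₁.sem γ ⊓ ζ₂.sem γ := by
  simp only [otimes, sem, DeMorganAlg.compl_sup, DeMorganAlg.compl_compl]

theorem sem_coal (ζ₁ ζ₂ : fPCL P) (γ : Finset (fI P K)) :
    (coal ζ₁ ζ₂).sem γ = γ.coverPairs.sup fun q => ζ₁.sem q.1 ⊓ ζ₂.sem q.2 :=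
  rfl

theorem sem_pil_tt (γ : Finset (fI P K)) : (pil .tt : fPCL P).sem γ = ⊤ :=
  Finset.inf_top γ

theorem sem_closure (ζ : fPCL P) (γ : Finset (fI P K)) :
    ζ.closure.sem γ = γ.nonemptySubsets.sup ζ.sem := by
  simp only [closure, sem_coal, sem_pil_tt, inf_top_eq, ← Finset.image_fst_coverPairs,
    Finset.sup_image]
  rfl

theorem sem_closure_otimes_closure (ζ₁ ζ₂ : fPCL P) (γ : Finset (fI P K)) :
    (ζ₁.closure.otimes ζ₂.closure).sem γ = (coal ζ₁ ζ₂).closure.sem γ := by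
  rw [sem_otimes, sem_closure, sem_closure, sem_closure, Finset.sup_inf_sup,
    ← Finset.biUnion_coverPairs_nonemptySubsets, Finset.sup_biUnion]
  rfl

end fPCL

theorem fpcl_bigOtimes_closure_general {P : Type} (n : ℕ) (φ : Fin (n + 1) → fPIL P) :
    pclEquiv (fPCL.bigOtimes n fun j => (fPCL.pil (φ j)).closure)
      (fPCL.closure (fPCL.bigCoal n fun j => .pil (φ j))) := by
  induction n with
  | zero => intro K _ γ _; rfl
  | succ n ih =>
    intro K _ γ hγ
    rw [fPCL.bigOtimes, fPCL.sem_otimes, ih _ K γ hγ, ← fPCL.sem_otimes,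
      fPCL.sem_closure_otimes_closure, fPCL.bigCoal]

/-- for a finite nonempty index set `J = Fin (n+1)` and fPIL
formulas `φ j`, `⊗_{j∈J} (~φ_j) ≡ ~(⊎_{j∈J} φ_j)` as fPCL formulas. -/
theorem fpcl_bigOtimes_closure {P : Type} [Fintype P] (n : ℕ) (φ : Fin (n + 1) → fPIL P) :
    pclEquiv (fPCL.bigOtimes n fun j => (fPCL.pil (φ j)).closure)
      (fPCL.closure (fPCL.bigCoal n fun j => .pil (φ j))) :=
  fpcl_bigOtimes_closure_general n φ
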